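/- arXiv:0910.3965 — 2 statements merged into one kernel-verified Lean document; each statement's English description precedes it below -/
import Mathlib

section
/- Let M₈ be the 8×8 matrix above, and define φ : Z^8 → Z^{11} on the standard basis v₁,…,v₈ by φ(v₁) = −e₁−e₂−e₃−e₄, φ(v₂) = e₂−e₇, φ(v₃) = e₂+e₇, φ(v₄) = e₃−e₈, φ(v₅) = e₃+e₈, φ(v₆) = e₄−e₉, φ(v₇) = e₄+e₉, φ(v₈) = e₁+e₁₀+e₁₁, where e₁,…,e₁₁ is the standard basis of Z^{11}. Then for all x, y ∈ Z^8, ⟨φ(x), φ(y)⟩ = x^T M₈ y, where ⟨·,·⟩ is the negative definite standard form on Z^{11} given by ⟨eᵢ, eⱼ⟩ = −δᵢⱼ. In particular φ is an isometric embedding of the lattice (Z^8, M₈) into the diagonal lattice (Z^{11}, −Id). -/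
open Matrix

def w8 : Fin 8 → ℤ := ![-4, -2, -2, -2, -2, -2, -2, -3]

def M8 : Matrix (Fin 8) (Fin 8) ℤ :=
  Matrix.of fun i j => if i = j then w8 i else if i = 0 ∨ j = 0 then 1 else 0

/-- The images φ(v₁),…,φ(v₈) in ℤ¹¹, written as rows. -/
def B8 : Matrix (Fin 8) (Fin 11) ℤ :=
  !![-1, -1, -1, -1, 0, 0, 0, 0, 0, 0, 0;
     0, 1, 0, 0, 0, 0, -1, 0, 0, 0, 0;
     0, 1, 0, 0, 0, 0, 1, 0, 0, 0, 0;
     0, 0, 1, 0, 0, 0, 0, -1, 0, 0, 0;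
     0, 0, 1, 0, 0, 0, 0, 1, 0, 0, 0;
     0, 0, 0, 1, 0, 0, 0, 0, -1, 0, 0;
     0, 0, 0, 1, 0, 0, 0, 0, 1, 0, 0;
     1, 0, 0, 0, 0, 0, 0, 0, 0, 1, 1]

/-- The linear map φ : ℤ⁸ → ℤ¹¹ sending vᵢ to the i-th row of `B8`. -/
def phi8 (x : Fin 8 → ℤ) : Fin 11 → ℤ := B8ᵀ.mulVec x

theorem Matrix.transpose_mulVec_dotProduct_transpose_mulVec {m n R : Type*} [Fintype m]
    [Fintype n] [CommSemiring R] (B : Matrix m n R) (x y : m → R) :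
    Bᵀ *ᵥ x ⬝ᵥ Bᵀ *ᵥ y = x ⬝ᵥ (B * Bᵀ) *ᵥ y := by
  rw [← mulVec_mulVec, dotProduct_mulVec x B, mulVec_transpose]

theorem B8_mul_transpose : B8 * B8ᵀ = -M8 := by
  decide

/-- φ is an isometric embedding of (ℤ⁸, M₈) into the negative definite diagonal
lattice (ℤ¹¹, −Id): for all x, y, ⟨φ(x), φ(y)⟩ = xᵀ M₈ y, where ⟨a,b⟩ = −∑ aᵢbᵢ. -/
theorem stmt_6 :
    ∀ x y : Fin 8 → ℤ, -(phi8 x ⬝ᵥ phi8 y) = x ⬝ᵥ M8.mulVec y := by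
  intro x y
  rw [phi8, phi8, transpose_mulVec_dotProduct_transpose_mulVec, B8_mul_transpose,
    neg_mulVec, dotProduct_neg, neg_neg]
end

section
/- Let M₈ be the 8×8 matrix with diagonal (−4,−2,−2,−2,−2,−2,−2,−3), (M₈)_{1j} = (M₈)_{j1} = 1 for j = 2,…,8, zeros elsewhere. The image of the vector K = (2,0,0,0,0,0,0,1) in the quotient group Z^8 / M₈(Z^8) is an element of order exactly 4. -/
open Matrix

/-- The sublattice M₈(ℤ⁸) ⊆ ℤ⁸, as an additive subgroup. -/
def imM8 : AddSubgroup (Fin 8 → ℤ) :=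
  (LinearMap.range M8.mulVecLin).toAddSubgroup

/-! The lower bound on the order comes from a character `ℤ⁸ → ℤ/8`, `x ↦ c ⬝ᵥ x mod 8`, with
`c ᵥ* M₈ ≡ 0 mod 8`: it factors through `ℤ⁸ / M₈(ℤ⁸)` and sends `K` to an element of order `4`.
The upper bound is the explicit identity `4 K = M₈ (-14, -7, -7, -7, -7, -7, -7, -6)`. -/

theorem QuotientAddGroup.addOrderOf_dvd_addOrderOf_mk {G H : Type*} [AddGroup G] [AddGroup H]
    {N : AddSubgroup G} [N.Normal] (φ : G →+ H) (hφ : N ≤ φ.ker) (x : G) :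
    addOrderOf (φ x) ∣ addOrderOf (x : G ⧸ N) :=
  addOrderOf_map_dvd (QuotientAddGroup.lift N φ hφ) (x : G ⧸ N)

section DotProductMod

variable {ι : Type*} [Fintype ι]

def dotProductMod (n : ℕ) (c : ι → ℤ) : (ι → ℤ) →+ ZMod n where
  toFun x := ((c ⬝ᵥ x : ℤ) : ZMod n)
  map_zero' := by simp
  map_add' x y := by simp [dotProduct_add]

theorem range_mulVecLin_le_ker_dotProductMod {n : ℕ} {c : ι → ℤ} {M : Matrix ι ι ℤ}
    (hc : ∀ j, (n : ℤ) ∣ (c ᵥ* M) j) :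
    (LinearMap.range M.mulVecLin).toAddSubgroup ≤ (dotProductMod n c).ker := by
  rintro _ ⟨x, rfl⟩
  change ((c ⬝ᵥ M *ᵥ x : ℤ) : ZMod n) = 0
  rw [dotProduct_mulVec, ZMod.intCast_zmod_eq_zero_iff_dvd]
  exact Finset.dvd_sum fun j _ => (hc j).mul_right (x j)

end DotProductMod

/-- The image of K = (2,0,0,0,0,0,0,1) in ℤ⁸ / M₈(ℤ⁸) has order exactly 4. -/
theorem stmt_9 :
    addOrderOf ((QuotientAddGroup.mk ![2, 0, 0, 0, 0, 0, 0, 1] :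
      (Fin 8 → ℤ) ⧸ imM8)) = 4 := by
  set K : Fin 8 → ℤ := ![2, 0, 0, 0, 0, 0, 0, 1]
  have hupper : addOrderOf (K : (Fin 8 → ℤ) ⧸ imM8) ∣ 4 := by
    refine addOrderOf_dvd_of_nsmul_eq_zero ?_
    rw [← QuotientAddGroup.mk_nsmul, QuotientAddGroup.eq_zero_iff]
    exact ⟨![-14, -7, -7, -7, -7, -7, -7, -6], by decide⟩
  have hlower : 4 ∣ addOrderOf (K : (Fin 8 → ℤ) ⧸ imM8) := by
    let c : Fin 8 → ℤ := ![2, 1, 1, 1, 1, 1, 5, 6]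
    have hc : ∀ j, ((8 : ℕ) : ℤ) ∣ (c ᵥ* M8) j := by decide
    have hφK : dotProductMod 8 c K = 2 := by decide
    have h2 : addOrderOf (2 : ZMod 8) = 4 := by
      simpa using ZMod.addOrderOf_coe 2 (n := 8) (by norm_num)
    have h := QuotientAddGroup.addOrderOf_dvd_addOrderOf_mk (N := imM8) (dotProductMod 8 c)
      (range_mulVecLin_le_ker_dotProductMod hc) K
    rwa [hφK, h2] at h
  exact Nat.dvd_antisymm hupper hlower
end
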